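/- arXiv:2311.02906 — 2 statements merged into one kernel-verified Lean document; each statement's English description precedes it below -/
import Mathlib

section
/- Let K be a complete non-archimedean valued field, r ∈ (ℝ>0)ⁿ, and f ∈ K{r⁻¹T} a nonzero element of the polydisc algebra. Then f is a unit in K{r⁻¹T} if and only if ord(f) = 0, where ord(f) is the maximal total degree |I| among multi-indices I achieving |a_I| r^I = ‖f‖ (Gauss norm). -/
open Filter

open Filter

/-- Membership in the polydisc algebra `K{r⁻¹T}`: the power series `f` has coefficients
with `‖a_I‖ · r^I → 0`. -/
def MemPolydisc {K : Type*} [NormedField K] {n : ℕ} (r : Fin n → ℝ)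
    (f : MvPowerSeries (Fin n) K) : Prop :=
  Tendsto (fun I : Fin n →₀ ℕ => ‖MvPowerSeries.coeff I f‖ * ∏ i, r i ^ I i)
    cofinite (nhds 0)

/-- The Gauss norm `‖∑ a_I T^I‖ = sup_I ‖a_I‖ r^I` on the polydisc algebra. -/
noncomputable def gaussNorm {K : Type*} [NormedField K] {n : ℕ} (r : Fin n → ℝ)
    (f : MvPowerSeries (Fin n) K) : ℝ :=
  ⨆ I : Fin n →₀ ℕ, ‖MvPowerSeries.coeff I f‖ * ∏ i, r i ^ I i

/-- `ord(f)`: the maximal total degree `|I|` among multi-indices `I` with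
`‖a_I‖ r^I = ‖f‖` (Gauss norm). -/
noncomputable def polyOrd {K : Type*} [NormedField K] {n : ℕ} (r : Fin n → ℝ)
    (f : MvPowerSeries (Fin n) K) : ℕ :=
  sSup {d : ℕ | ∃ I : Fin n →₀ ℕ, (I.sum fun _ k => k) = d ∧
    ‖MvPowerSeries.coeff I f‖ * ∏ i, r i ^ I i = gaussNorm r f}

/-!
If `f * g = 1`, take the lexicographically largest indices `I`, `J` at which `f` and `g` attain
their Gauss norms. In the coefficient of `T^(I+J)` in `f * g` every other term of the convolution
is strictly smaller, so by the ultrametric inequality its norm times `r^(I+J)` is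
`‖f‖ * ‖g‖ ≠ 0`; as `f * g = 1` this forces `I + J = 0`, hence only the index `0` attains `‖f‖`.

Conversely, if only the constant term `a` attains `‖f‖`, write `f = a (1 - h)` with `h(0) = 0` and
all terms of `h` bounded by some `q < 1`. Then `(1 - h)⁻¹ = ∑ h^k`, where the coefficient of `T^I`
only involves `k ≤ |I|` and the terms of `h^k` are at most `q^k`; so for `k` large the powers
contribute nothing above a given `ε`, and the finitely many small powers lie in the polydisc
algebra, which is closed under multiplication.
-/

open MvPowerSeries Finset

lemma MvPowerSeries.coeff_inv_one_sub {σ k : Type*} [Field k] {h : MvPowerSeries σ k}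
    (h0 : constantCoeff h = 0) (d : σ →₀ ℕ) :
    coeff d (1 - h)⁻¹ = ∑ i ∈ range (d.degree + 1), coeff d (h ^ i) := by
  have hgeom : ∑ i ∈ range (d.degree + 1), h ^ i = (1 - h)⁻¹ * (1 - h ^ (d.degree + 1)) := by
    rw [← mul_neg_geom_sum, ← mul_assoc, MvPowerSeries.inv_mul_cancel _ (by simp [h0]), one_mul]
  rw [← map_sum, hgeom, coeff_mul_left_one_sub_of_lt_order]
  exact (ENat.natCast_lt_natCast.2 d.degree.lt_succ_self).trans_le
    (le_order_pow_of_constantCoeff_eq_zero _ h0)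

section GaussTerm

variable {K : Type*} [NormedField K] {n : ℕ} {r : Fin n → ℝ} {f g : MvPowerSeries (Fin n) K}

noncomputable def gaussTerm (r : Fin n → ℝ) (f : MvPowerSeries (Fin n) K) (I : Fin n →₀ ℕ) : ℝ :=
  ‖coeff I f‖ * ∏ i, r i ^ I i

def dominantIndices (r : Fin n → ℝ) (f : MvPowerSeries (Fin n) K) : Set (Fin n →₀ ℕ) :=
  {I | gaussTerm r f I = gaussNorm r f}

lemma prod_pow_add (r : Fin n → ℝ) (I J : Fin n →₀ ℕ) :
    ∏ i, r i ^ (I + J) i = (∏ i, r i ^ I i) * ∏ i, r i ^ J i := by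
  simp only [Finsupp.add_apply, pow_add, prod_mul_distrib]

lemma gaussTerm_nonneg (hr : ∀ i, 0 ≤ r i) (f : MvPowerSeries (Fin n) K) (I : Fin n →₀ ℕ) :
    0 ≤ gaussTerm r f I :=
  mul_nonneg (norm_nonneg _) (prod_nonneg fun i _ => pow_nonneg (hr i) _)

lemma gaussTerm_zero (r : Fin n → ℝ) (f : MvPowerSeries (Fin n) K) :
    gaussTerm r f 0 = ‖constantCoeff f‖ := by
  simp [gaussTerm]

lemma memPolydisc_iff (hr : ∀ i, 0 ≤ r i) :
    MemPolydisc r f ↔ ∀ ε > 0, {I | ε ≤ gaussTerm r f I}.Finite := by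
  change Tendsto (gaussTerm r f) cofinite (nhds 0) ↔ _
  simp only [tendsto_order, eventually_cofinite, not_lt]
  refine ⟨And.right, fun h => ⟨fun a ha => ?_, h⟩⟩
  exact Set.finite_empty.subset fun I hI => (hI.trans_lt ha).not_ge (gaussTerm_nonneg hr f I)

lemma exists_forall_gaussTerm_le (hr : ∀ i, 0 ≤ r i) (hf : MemPolydisc r f) :
    ∃ I, ∀ J, gaussTerm r f J ≤ gaussTerm r f I := by
  by_cases hpos : ∃ I₀, 0 < gaussTerm r f I₀
  · obtain ⟨I₀, hI₀⟩ := hpos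
    obtain ⟨I, hI, hImax⟩ := Set.exists_max_image _ (gaussTerm r f)
      ((memPolydisc_iff hr).1 hf _ hI₀) ⟨I₀, le_refl (gaussTerm r f I₀)⟩
    refine ⟨I, fun J => ?_⟩
    by_cases hJ : gaussTerm r f I₀ ≤ gaussTerm r f J
    · exact hImax J hJ
    · exact (not_le.1 hJ).le.trans hI
  · simp only [not_exists, not_lt] at hpos
    exact ⟨0, fun J => (hpos J).trans (gaussTerm_nonneg hr f 0)⟩

lemma gaussTerm_le_gaussNorm (hf : MemPolydisc r f) (I : Fin n →₀ ℕ) :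
    gaussTerm r f I ≤ gaussNorm r f :=
  le_ciSup (Tendsto.bddAbove_range_of_cofinite hf) I

lemma dominantIndices_nonempty (hr : ∀ i, 0 ≤ r i) (hf : MemPolydisc r f) :
    (dominantIndices r f).Nonempty := by
  obtain ⟨I, hI⟩ := exists_forall_gaussTerm_le hr hf
  exact ⟨I, (gaussTerm_le_gaussNorm hf I).antisymm (ciSup_le hI)⟩

lemma gaussNorm_pos (hr : ∀ i, 0 < r i) (hf0 : f ≠ 0) (hf : MemPolydisc r f) :
    0 < gaussNorm r f := by
  obtain ⟨I, hI⟩ := (ne_zero_iff_exists_coeff_ne_zero f).1 hf0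
  exact (mul_pos (norm_pos_iff.2 hI) (prod_pos fun i _ => pow_pos (hr i) _)).trans_le
    (gaussTerm_le_gaussNorm hf I)

lemma coeff_ne_zero_of_mem_dominantIndices (hr : ∀ i, 0 < r i) (hf0 : f ≠ 0)
    (hf : MemPolydisc r f) {I : Fin n →₀ ℕ} (hI : I ∈ dominantIndices r f) : coeff I f ≠ 0 := by
  intro h
  have : gaussTerm r f I = 0 := by simp [gaussTerm, h]
  exact (gaussNorm_pos hr hf0 hf).ne' (hI.symm.trans this)

lemma dominantIndices_finite (hr : ∀ i, 0 < r i) (hf0 : f ≠ 0) (hf : MemPolydisc r f) :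
    (dominantIndices r f).Finite :=
  ((memPolydisc_iff fun i => (hr i).le).1 hf _ (gaussNorm_pos hr hf0 hf)).subset
    fun _ hI => hI.symm.le

lemma polyOrd_eq_zero_iff (hr : ∀ i, 0 < r i) (hf0 : f ≠ 0) (hf : MemPolydisc r f) :
    polyOrd r f = 0 ↔ dominantIndices r f ⊆ {0} := by
  have hset : polyOrd r f = sSup (Finsupp.degree '' dominantIndices r f) := by
    unfold polyOrd
    congr 1
    ext d
    exact ⟨fun ⟨I, hd, hI⟩ => ⟨I, hI, hd⟩, fun ⟨I, hI, hd⟩ => ⟨I, hd, hI⟩⟩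
  rw [hset]
  constructor
  · intro h I hI
    have := le_csSup ((dominantIndices_finite hr hf0 hf).image Finsupp.degree).bddAbove
      (Set.mem_image_of_mem _ hI)
    exact (Finsupp.degree_eq_zero_iff I).1 (Nat.le_zero.1 (h ▸ this))
  · intro h
    refine Nat.le_zero.1 (csSup_le' ?_)
    rintro _ ⟨I, hI, rfl⟩
    rw [h hI, map_zero]

lemma memPolydisc_algebraMap (hr : ∀ i, 0 ≤ r i) (a : K) :
    MemPolydisc r (algebraMap K (MvPowerSeries (Fin n) K) a) := by
  rw [memPolydisc_iff hr]
  intro ε hε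
  refine (Set.finite_singleton 0).subset fun I hI => by_contra fun hI0 => ?_
  rw [Set.mem_singleton_iff] at hI0
  have : gaussTerm r (algebraMap K (MvPowerSeries (Fin n) K) a) I = 0 := by
    simp [gaussTerm, MvPowerSeries.algebraMap_apply, coeff_C, hI0]
  exact (hI.trans_eq this).not_gt hε

lemma gaussTerm_mul_gaussTerm_lt_of_lexMax (hr : ∀ i, 0 ≤ r i)
    (hf : MemPolydisc r f) (hg : MemPolydisc r g) (hfpos : 0 < gaussNorm r f)
    (hgpos : 0 < gaussNorm r g) {I J : Fin n →₀ ℕ}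
    (hImax : ∀ I' ∈ dominantIndices r f, toLex I' ≤ toLex I)
    (hJmax : ∀ J' ∈ dominantIndices r g, toLex J' ≤ toLex J)
    {p : (Fin n →₀ ℕ) × (Fin n →₀ ℕ)} (hp : p.1 + p.2 = I + J) (hpIJ : p ≠ (I, J)) :
    gaussTerm r f p.1 * gaussTerm r g p.2 < gaussNorm r f * gaussNorm r g := by
  rcases lt_trichotomy (toLex p.1) (toLex I) with hlt | heq | hgt
  · have hJp : toLex J < toLex p.2 := by
      by_contra! hle
      have := add_lt_add_of_lt_of_le hlt hle
      rw [← toLex_add, ← toLex_add, hp] at this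
      exact this.false
    have hg_lt : gaussTerm r g p.2 < gaussNorm r g :=
      (gaussTerm_le_gaussNorm hg p.2).lt_of_ne fun hdom => (hJmax p.2 hdom).not_gt hJp
    exact mul_lt_mul' (gaussTerm_le_gaussNorm hf p.1) hg_lt (gaussTerm_nonneg hr g p.2) hfpos
  · have h1 : p.1 = I := toLex.injective heq
    exact absurd (Prod.ext h1 (add_left_cancel (h1 ▸ hp))) hpIJ
  · have hf_lt : gaussTerm r f p.1 < gaussNorm r f :=
      (gaussTerm_le_gaussNorm hf p.1).lt_of_ne fun hdom => (hImax p.1 hdom).not_gt hgt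
    exact (mul_le_mul_of_nonneg_left (gaussTerm_le_gaussNorm hg p.2)
      (gaussTerm_nonneg hr f p.1)).trans_lt (mul_lt_mul_of_pos_right hf_lt hgpos)

section Ultrametric

variable [IsUltrametricDist K]

lemma gaussTerm_add_le_max (hr : ∀ i, 0 ≤ r i) (f g : MvPowerSeries (Fin n) K)
    (I : Fin n →₀ ℕ) : gaussTerm r (f + g) I ≤ max (gaussTerm r f I) (gaussTerm r g I) := by
  rw [gaussTerm, gaussTerm, gaussTerm, ← max_mul_of_nonneg _ _
    (prod_nonneg fun i _ => pow_nonneg (hr i) _), map_add]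
  exact mul_le_mul_of_nonneg_right (IsUltrametricDist.norm_add_le_max _ _)
    (prod_nonneg fun i _ => pow_nonneg (hr i) _)

lemma exists_gaussTerm_mul_le (hr : ∀ i, 0 ≤ r i) (f g : MvPowerSeries (Fin n) K)
    (N : Fin n →₀ ℕ) : ∃ p ∈ antidiagonal N,
      gaussTerm r (f * g) N ≤ gaussTerm r f p.1 * gaussTerm r g p.2 := by
  obtain ⟨p, hp, hle⟩ := IsUltrametricDist.exists_norm_finsetSum_le_of_nonempty
    ⟨(0, N), mem_antidiagonal.2 (zero_add N)⟩
    fun p : (Fin n →₀ ℕ) × (Fin n →₀ ℕ) => coeff p.1 f * coeff p.2 g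
  refine ⟨p, hp, ?_⟩
  have hw := prod_pow_add r p.1 p.2
  rw [mem_antidiagonal.1 hp] at hw
  rw [gaussTerm, coeff_mul, hw]
  calc _ ≤ ‖coeff p.1 f * coeff p.2 g‖ * ((∏ i, r i ^ p.1 i) * ∏ i, r i ^ p.2 i) :=
        mul_le_mul_of_nonneg_right hle
          (mul_nonneg (prod_nonneg fun i _ => pow_nonneg (hr i) _)
            (prod_nonneg fun i _ => pow_nonneg (hr i) _))
    _ = gaussTerm r f p.1 * gaussTerm r g p.2 := by
        rw [gaussTerm, gaussTerm, norm_mul]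
        ring

lemma MemPolydisc.mul (hr : ∀ i, 0 ≤ r i) (hf : MemPolydisc r f) (hg : MemPolydisc r g) :
    MemPolydisc r (f * g) := by
  obtain ⟨I₀, hI₀⟩ := exists_forall_gaussTerm_le hr hf
  obtain ⟨J₀, hJ₀⟩ := exists_forall_gaussTerm_le hr hg
  set A := gaussTerm r f I₀ + 1
  set B := gaussTerm r g J₀ + 1
  have hA : 0 < A := by have := gaussTerm_nonneg hr f I₀; positivity
  have hB : 0 < B := by have := gaussTerm_nonneg hr g J₀; positivity
  rw [memPolydisc_iff hr] at hf hg ⊢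
  intro ε hε
  refine ((hf _ (div_pos hε hB)).image2 (· + ·) (hg _ (div_pos hε hA))).subset ?_
  intro N hN
  obtain ⟨p, hp, hle⟩ := exists_gaussTerm_mul_le hr f g N
  have hε' : ε ≤ gaussTerm r f p.1 * gaussTerm r g p.2 := hN.trans hle
  refine ⟨p.1, ?_, p.2, ?_, mem_antidiagonal.1 hp⟩
  · rw [Set.mem_ofPred_eq, div_le_iff₀ hB]
    exact hε'.trans (mul_le_mul_of_nonneg_left ((hJ₀ _).trans (by linarith))
      (gaussTerm_nonneg hr f _))
  · rw [Set.mem_ofPred_eq, div_le_iff₀ hA, mul_comm]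
    exact hε'.trans (mul_le_mul_of_nonneg_right ((hI₀ _).trans (by linarith))
      (gaussTerm_nonneg hr g _))

lemma MemPolydisc.add (hr : ∀ i, 0 ≤ r i) (hf : MemPolydisc r f) (hg : MemPolydisc r g) :
    MemPolydisc r (f + g) := by
  rw [memPolydisc_iff hr] at hf hg ⊢
  intro ε hε
  exact ((hf ε hε).union (hg ε hε)).subset fun I hI =>
    le_max_iff.1 (hI.trans (gaussTerm_add_le_max hr f g I))

variable (K) in
def polydiscSubalgebra (hr : ∀ i, 0 ≤ r i) : Subalgebra K (MvPowerSeries (Fin n) K) where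
  carrier := {f | MemPolydisc r f}
  mul_mem' := MemPolydisc.mul hr
  add_mem' := MemPolydisc.add hr
  algebraMap_mem' := memPolydisc_algebraMap hr

lemma gaussTerm_pow_le (hr : ∀ i, 0 ≤ r i) {h : MvPowerSeries (Fin n) K} {q : ℝ}
    (hq : ∀ I, gaussTerm r h I ≤ q) (k : ℕ) (I : Fin n →₀ ℕ) :
    gaussTerm r (h ^ k) I ≤ q ^ k := by
  induction k generalizing I with
  | zero => by_cases hI : I = 0 <;> simp [gaussTerm, coeff_one, hI]
  | succ k ih =>
    obtain ⟨p, -, hle⟩ := exists_gaussTerm_mul_le hr (h ^ k) h I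
    rw [pow_succ, pow_succ]
    exact hle.trans (mul_le_mul (ih p.1) (hq p.2) (gaussTerm_nonneg hr h _)
      (pow_nonneg ((gaussTerm_nonneg hr h 0).trans (hq 0)) k))

lemma memPolydisc_inv_one_sub (hr : ∀ i, 0 ≤ r i) {h : MvPowerSeries (Fin n) K}
    (hh : MemPolydisc r h) (h0 : constantCoeff h = 0) {q : ℝ} (hq : ∀ I, gaussTerm r h I ≤ q)
    (hq1 : q < 1) : MemPolydisc r (1 - h)⁻¹ := by
  have hq0 : 0 ≤ q := (gaussTerm_nonneg hr h 0).trans (hq 0)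
  rw [memPolydisc_iff hr]
  intro ε hε
  obtain ⟨k₀, hk₀⟩ := exists_pow_lt_of_lt_one hε hq1
  refine ((finite_toSet (range k₀)).biUnion fun k _ =>
    (memPolydisc_iff hr).1 (pow_mem (show h ∈ polydiscSubalgebra K hr from hh) k) ε hε).subset ?_
  intro I hI
  obtain ⟨k, hk, hle⟩ := IsUltrametricDist.exists_norm_finsetSum_le_of_nonempty
    nonempty_range_add_one fun k => coeff I (h ^ k)
  have hεk : ε ≤ gaussTerm r (h ^ k) I := by
    refine hI.trans ?_
    rw [gaussTerm, coeff_inv_one_sub h0]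
    exact mul_le_mul_of_nonneg_right hle (prod_nonneg fun i _ => pow_nonneg (hr i) _)
  refine Set.mem_biUnion (x := k) (mem_coe.2 (mem_range.2 ?_)) hεk
  by_contra! hk₀k
  exact (hεk.trans ((gaussTerm_pow_le hr hq k I).trans
    (pow_le_pow_of_le_one hq0 hq1.le hk₀k))).not_gt hk₀

lemma norm_coeff_add_mul_of_lexMax (hr : ∀ i, 0 < r i)
    (hf0 : f ≠ 0) (hg0 : g ≠ 0) (hf : MemPolydisc r f) (hg : MemPolydisc r g)
    {I J : Fin n →₀ ℕ} (hI : I ∈ dominantIndices r f)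
    (hImax : ∀ I' ∈ dominantIndices r f, toLex I' ≤ toLex I) (hJ : J ∈ dominantIndices r g)
    (hJmax : ∀ J' ∈ dominantIndices r g, toLex J' ≤ toLex J) :
    ‖coeff (I + J) (f * g)‖ = ‖coeff I f‖ * ‖coeff J g‖ := by
  rw [antidiagonal_dominant (‖·‖) f g I J IsUltrametricDist.isNonarchimedean_norm norm_mul
    (fun a => (norm_neg a).symm), norm_mul]
  intro p hp hpIJ
  have hp' : p.1 + p.2 = I + J := mem_antidiagonal.1 hp
  have hw : 0 < ∏ i, r i ^ (I + J) i := prod_pos fun i _ => pow_pos (hr i) _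
  have key := gaussTerm_mul_gaussTerm_lt_of_lexMax (fun i => (hr i).le) hf hg
    (gaussNorm_pos hr hf0 hf) (gaussNorm_pos hr hg0 hg) hImax hJmax hp' hpIJ
  rw [← hI, ← hJ, gaussTerm, gaussTerm, gaussTerm, gaussTerm] at key
  refine lt_of_mul_lt_mul_right ?_ hw.le
  calc ‖coeff p.1 f * coeff p.2 g‖ * ∏ i, r i ^ (I + J) i
      = ‖coeff p.1 f‖ * (∏ i, r i ^ p.1 i) * (‖coeff p.2 g‖ * ∏ i, r i ^ p.2 i) := by
        rw [← hp', prod_pow_add, norm_mul]; ring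
    _ < ‖coeff I f‖ * (∏ i, r i ^ I i) * (‖coeff J g‖ * ∏ i, r i ^ J i) := key
    _ = ‖coeff I f‖ * ‖coeff J g‖ * ∏ i, r i ^ (I + J) i := by rw [prod_pow_add]; ring

lemma dominantIndices_subset_zero_of_mul_eq_one (hr : ∀ i, 0 < r i)
    (hf0 : f ≠ 0) (hf : MemPolydisc r f) (hg : MemPolydisc r g)
    (hfg : f * g = 1) : dominantIndices r f ⊆ {0} := by
  have hg0 : g ≠ 0 := by rintro rfl; simp at hfg
  obtain ⟨I, hI, hImax⟩ := Set.exists_max_image _ toLex (dominantIndices_finite hr hf0 hf)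
    (dominantIndices_nonempty (fun i => (hr i).le) hf)
  obtain ⟨J, hJ, hJmax⟩ := Set.exists_max_image _ toLex (dominantIndices_finite hr hg0 hg)
    (dominantIndices_nonempty (fun i => (hr i).le) hg)
  have hIJ : I + J = 0 := by
    by_contra hIJ
    have := norm_coeff_add_mul_of_lexMax hr hf0 hg0 hf hg hI hImax hJ hJmax
    rw [hfg, coeff_one, if_neg hIJ, norm_zero] at this
    exact mul_ne_zero (norm_ne_zero_iff.2 (coeff_ne_zero_of_mem_dominantIndices hr hf0 hf hI))
      (norm_ne_zero_iff.2 (coeff_ne_zero_of_mem_dominantIndices hr hg0 hg hJ)) this.symm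
  intro I' hI'
  have hle : toLex I' ≤ toLex 0 := (add_eq_zero.1 hIJ).1 ▸ hImax I' hI'
  exact toLex.injective (hle.antisymm (Finsupp.toLex_monotone (zero_le : 0 ≤ I')))

lemma exists_memPolydisc_mul_eq_one (hr : ∀ i, 0 < r i)
    (hf0 : f ≠ 0) (hf : MemPolydisc r f) (hdom : dominantIndices r f ⊆ {0}) :
    ∃ g, MemPolydisc r g ∧ f * g = 1 := by
  have hr' : ∀ i, 0 ≤ r i := fun i => (hr i).le
  set a := constantCoeff f
  obtain ⟨I₀, hI₀⟩ := dominantIndices_nonempty hr' hf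
  have ha : ‖a‖ = gaussNorm r f := by
    rw [← gaussTerm_zero, ← hdom hI₀]
    exact hI₀
  have ha0 : a ≠ 0 := norm_ne_zero_iff.1 (ha ▸ (gaussNorm_pos hr hf0 hf).ne')
  set h := 1 - a⁻¹ • f
  have hh : MemPolydisc r h :=
    sub_mem (one_mem (polydiscSubalgebra K hr')) (Subalgebra.smul_mem _ hf a⁻¹)
  have h0 : constantCoeff h = 0 := by simp [h, a, ha0]
  have hlt : ∀ I, gaussTerm r h I < 1 := by
    intro I
    by_cases hI : I = 0
    · simp [hI, gaussTerm_zero, h0]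
    have hfI : gaussTerm r f I < ‖a‖ :=
      ha ▸ (gaussTerm_le_gaussNorm hf I).lt_of_ne fun hdomI => hI (hdom hdomI)
    have : gaussTerm r h I = gaussTerm r f I / ‖a‖ := by
      simp [gaussTerm, h, coeff_one, hI, div_eq_inv_mul, mul_assoc]
    rw [this, div_lt_one (norm_pos_iff.2 ha0)]
    exact hfI
  obtain ⟨J, hJ⟩ := exists_forall_gaussTerm_le hr' hh
  refine ⟨a⁻¹ • (1 - h)⁻¹, Subalgebra.smul_mem (polydiscSubalgebra K hr')
    (memPolydisc_inv_one_sub hr' hh h0 hJ (hlt J)) a⁻¹, ?_⟩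
  rw [mul_smul_comm, ← smul_mul_assoc, show a⁻¹ • f = 1 - h by simp [h]]
  exact MvPowerSeries.mul_inv_cancel _ (by simp [h0])

end Ultrametric

end GaussTerm

theorem isUnit_polydisc_iff_polyOrd_eq_zero_general {K : Type*} [NormedField K]
    [IsUltrametricDist K] {n : ℕ} (r : Fin n → ℝ) (hr : ∀ i, 0 < r i)
    (f : MvPowerSeries (Fin n) K) (hf0 : f ≠ 0) (hf : MemPolydisc r f) :
    (∃ g : MvPowerSeries (Fin n) K, MemPolydisc r g ∧ f * g = 1) ↔ polyOrd r f = 0 := by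
  rw [polyOrd_eq_zero_iff hr hf0 hf]
  constructor
  · rintro ⟨g, hg, hfg⟩
    exact dominantIndices_subset_zero_of_mul_eq_one hr hf0 hf hg hfg
  · exact exists_memPolydisc_mul_eq_one hr hf0 hf

/-- A nonzero element `f` of the polydisc algebra `K{r⁻¹T}` over a complete
non-archimedean valued field is a unit of the polydisc algebra (there is `g` in the
polydisc algebra with `f·g = 1`) if and only if `ord(f) = 0`. -/
theorem isUnit_polydisc_iff_polyOrd_eq_zero {K : Type*} [NormedField K]
    [IsUltrametricDist K] [CompleteSpace K] {n : ℕ} (r : Fin n → ℝ) (hr : ∀ i, 0 < r i)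
    (f : MvPowerSeries (Fin n) K) (hf0 : f ≠ 0) (hf : MemPolydisc r f) :
    (∃ g : MvPowerSeries (Fin n) K, MemPolydisc r g ∧ f * g = 1) ↔ polyOrd r f = 0 :=
  isUnit_polydisc_iff_polyOrd_eq_zero_general r hr f hf0 hf
end

section
/- Let K be a complete non-archimedean valued field, r ∈ (ℝ>0)ⁿ, and f ∈ K{r⁻¹T} nonzero. Then the set 𝓘(f) of multi-indices I ∈ ℤ≥0ⁿ for which there exists s with 0 < sᵢ ≤ rᵢ for all i such that |a_I| s^I equals the Gauss norm of f in K{s⁻¹T} is finite. In particular, the set of values ord_{K{s⁻¹T}}(f) as s ranges over ∏(0, rᵢ] is finite. -/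
open Filter

/-!
If `J` attains the Gauss norm at some `s ≤ r` and `I ≤ J` componentwise, then
`‖a_I‖ s^I ≤ ‖a_J‖ s^J`, and multiplying by `(r/s)^I ≤ (r/s)^J` gives
`‖a_I‖ r^I ≤ ‖a_J‖ r^J`. So `I ↦ ‖a_I‖ r^I` is monotone and positive on `𝓘(f)`. By Dickson's
lemma an infinite `𝓘(f)` would contain an infinite increasing chain, along which these terms
stay above a positive constant, contradicting `‖a_I‖ r^I → 0`. Each `ord_{K{s⁻¹T}}(f)` is the
degree of some element of `𝓘(f)`.
-/

open Topology

theorem Set.Finite.of_monotoneOn_of_tendsto_cofinite_zero {α : Type*} [Preorder α]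
    [WellQuasiOrderedLE α] {S : Set α} {g : α → ℝ} (hg : Tendsto g cofinite (𝓝 0))
    (hpos : ∀ x ∈ S, 0 < g x) (hmono : MonotoneOn g S) : S.Finite := by
  by_contra hS
  let e := Set.Infinite.natEmbedding S hS
  obtain ⟨φ, hφ⟩ := (Set.isPWO_of_wellQuasiOrderedLE S).exists_monotone_subseq
    (f := fun k => (e k : α)) (fun k => (e k).2)
  set u : ℕ → α := fun k => e (φ k)
  have hu_inj : Function.Injective u := fun a b hab => φ.injective (e.injective (Subtype.ext hab))
  have hu_tendsto : Tendsto (g ∘ u) atTop (𝓝 0) := by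
    rw [← Nat.cofinite_eq_atTop]
    exact hg.comp hu_inj.tendsto_cofinite
  have hu_ge : ∀ k, g (u 0) ≤ g (u k) := fun k =>
    hmono (e (φ 0)).2 (e (φ k)).2 (hφ (Nat.zero_le k))
  exact (hpos _ (e (φ 0)).2).not_ge (ge_of_tendsto' hu_tendsto hu_ge)

theorem exists_apply_eq_ciSup_of_tendsto_cofinite_zero {α : Type*} {g : α → ℝ}
    (hg : Tendsto g cofinite (𝓝 0)) {x₀ : α} (hx₀ : 0 < g x₀) : ∃ x, g x = ⨆ y, g y := by
  have hlevel : {y | g x₀ ≤ g y}.Finite :=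
    (eventually_cofinite.mp (hg.eventually_lt_const hx₀)).subset fun y hy => not_lt.mpr hy
  obtain ⟨x, hx, hx_max⟩ := Set.exists_max_image _ g hlevel ⟨x₀, le_refl (g x₀)⟩
  have hgreatest : IsGreatest (Set.range g) (g x) := by
    refine ⟨⟨x, rfl⟩, ?_⟩
    rintro _ ⟨y, rfl⟩
    by_cases hy : g x₀ ≤ g y
    · exact hx_max y hy
    · exact (not_le.mp hy).le.trans hx
  exact ⟨x, hgreatest.csSup_eq.symm⟩

section Polydisc

variable {K : Type*} [NormedField K] {n : ℕ}

noncomputable def termNorm (s : Fin n → ℝ) (f : MvPowerSeries (Fin n) K) (I : Fin n →₀ ℕ) : ℝ :=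
  ‖MvPowerSeries.coeff I f‖ * ∏ i, s i ^ I i

/-- The set `𝓘(f)`. -/
def normAttainingIndices (r : Fin n → ℝ) (f : MvPowerSeries (Fin n) K) : Set (Fin n →₀ ℕ) :=
  {I | ∃ s : Fin n → ℝ, (∀ i, 0 < s i ∧ s i ≤ r i) ∧ termNorm s f I = gaussNorm s f}

theorem termNorm_nonneg {s : Fin n → ℝ} (hs : ∀ i, 0 ≤ s i) (f : MvPowerSeries (Fin n) K)
    (I : Fin n →₀ ℕ) : 0 ≤ termNorm s f I :=
  mul_nonneg (norm_nonneg _) (Finset.prod_nonneg fun i _ => pow_nonneg (hs i) _)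

theorem termNorm_pos {s : Fin n → ℝ} (hs : ∀ i, 0 < s i) {f : MvPowerSeries (Fin n) K}
    {I : Fin n →₀ ℕ} (hI : MvPowerSeries.coeff I f ≠ 0) : 0 < termNorm s f I :=
  mul_pos (norm_pos_iff.mpr hI) (Finset.prod_pos fun i _ => pow_pos (hs i) _)

theorem termNorm_mono {r s : Fin n → ℝ} (hs : ∀ i, 0 ≤ s i) (hsr : s ≤ r)
    (f : MvPowerSeries (Fin n) K) (I : Fin n →₀ ℕ) : termNorm s f I ≤ termNorm r f I :=
  mul_le_mul_of_nonneg_left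
    (Finset.prod_le_prod (fun i _ => pow_nonneg (hs i) _)
      (fun i _ => pow_le_pow_left₀ (hs i) (hsr i) _)) (norm_nonneg _)

theorem MemPolydisc.mono {r s : Fin n → ℝ} {f : MvPowerSeries (Fin n) K} (hf : MemPolydisc r f)
    (hs : ∀ i, 0 ≤ s i) (hsr : s ≤ r) : MemPolydisc s f :=
  tendsto_of_tendsto_of_tendsto_of_le_of_le tendsto_const_nhds hf
    (termNorm_nonneg hs f) (termNorm_mono hs hsr f)

theorem termNorm_le_gaussNorm {s : Fin n → ℝ} {f : MvPowerSeries (Fin n) K}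
    (hf : MemPolydisc s f) (I : Fin n →₀ ℕ) : termNorm s f I ≤ gaussNorm s f :=
  le_ciSup (Tendsto.bddAbove_range_of_cofinite hf) I

theorem exists_termNorm_pos {s : Fin n → ℝ} (hs : ∀ i, 0 < s i) {f : MvPowerSeries (Fin n) K}
    (hf0 : f ≠ 0) : ∃ J, 0 < termNorm s f J :=
  let ⟨J, hJ⟩ := (MvPowerSeries.ne_zero_iff_exists_coeff_ne_zero f).mp hf0
  ⟨J, termNorm_pos hs hJ⟩

theorem gaussNorm_pos_s8 {s : Fin n → ℝ} (hs : ∀ i, 0 < s i) {f : MvPowerSeries (Fin n) K}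
    (hf0 : f ≠ 0) (hf : MemPolydisc s f) : 0 < gaussNorm s f :=
  let ⟨J, hJ⟩ := exists_termNorm_pos hs hf0
  hJ.trans_le (termNorm_le_gaussNorm hf J)

theorem exists_termNorm_eq_gaussNorm {s : Fin n → ℝ} (hs : ∀ i, 0 < s i)
    {f : MvPowerSeries (Fin n) K} (hf0 : f ≠ 0) (hf : MemPolydisc s f) :
    ∃ I, termNorm s f I = gaussNorm s f :=
  let ⟨_, hJ⟩ := exists_termNorm_pos hs hf0
  exists_apply_eq_ciSup_of_tendsto_cofinite_zero hf hJ

/-- Shrinking the polyradius from `r` to `s` favours lower multi-indices: a comparison of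
terms at `s` between `I ≤ J` persists at `r`. -/
theorem termNorm_le_termNorm_of_le {r s : Fin n → ℝ} (hs : ∀ i, 0 < s i) (hsr : s ≤ r)
    {f : MvPowerSeries (Fin n) K} {I J : Fin n →₀ ℕ} (hIJ : I ≤ J)
    (h : termNorm s f I ≤ termNorm s f J) : termNorm r f I ≤ termNorm r f J := by
  obtain ⟨D, rfl⟩ := exists_add_of_le hIJ
  have prod_pow_add : ∀ t : Fin n → ℝ,
      ∏ i, t i ^ (I + D) i = (∏ i, t i ^ I i) * ∏ i, t i ^ D i := fun t => by
    simp only [Finsupp.coe_add, Pi.add_apply, pow_add, Finset.prod_mul_distrib]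
  have hsI : 0 < ∏ i, s i ^ I i := Finset.prod_pos fun i _ => pow_pos (hs i) _
  have hsD : ∏ i, s i ^ D i ≤ ∏ i, r i ^ D i :=
    Finset.prod_le_prod (fun i _ => pow_nonneg (hs i).le _)
      (fun i _ => pow_le_pow_left₀ (hs i).le (hsr i) _)
  have hrI : 0 ≤ ∏ i, r i ^ I i :=
    Finset.prod_nonneg fun i _ => pow_nonneg ((hs i).le.trans (hsr i)) _
  unfold termNorm at h ⊢
  rw [prod_pow_add] at h ⊢
  have hcoeff : ‖MvPowerSeries.coeff I f‖ ≤
      ‖MvPowerSeries.coeff (I + D) f‖ * ∏ i, r i ^ D i := by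
    refine le_of_mul_le_mul_right ?_ hsI
    calc ‖MvPowerSeries.coeff I f‖ * ∏ i, s i ^ I i
        ≤ ‖MvPowerSeries.coeff (I + D) f‖ * ((∏ i, s i ^ I i) * ∏ i, s i ^ D i) := h
      _ = ‖MvPowerSeries.coeff (I + D) f‖ * (∏ i, s i ^ D i) * ∏ i, s i ^ I i := by ring
      _ ≤ ‖MvPowerSeries.coeff (I + D) f‖ * (∏ i, r i ^ D i) * ∏ i, s i ^ I i := by gcongr
  calc ‖MvPowerSeries.coeff I f‖ * ∏ i, r i ^ I i
      ≤ ‖MvPowerSeries.coeff (I + D) f‖ * (∏ i, r i ^ D i) * ∏ i, r i ^ I i :=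
        mul_le_mul_of_nonneg_right hcoeff hrI
    _ = ‖MvPowerSeries.coeff (I + D) f‖ * ((∏ i, r i ^ I i) * ∏ i, r i ^ D i) := by ring

variable {r : Fin n → ℝ} {f : MvPowerSeries (Fin n) K}

theorem monotoneOn_termNorm_normAttainingIndices (hf : MemPolydisc r f) :
    MonotoneOn (termNorm r f) (normAttainingIndices r f) := by
  rintro I - J ⟨s, hs, hJ⟩ hIJ
  have hs_pos : ∀ i, 0 < s i := fun i => (hs i).1
  have hsr : s ≤ r := fun i => (hs i).2
  have hI_le : termNorm s f I ≤ termNorm s f J :=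
    hJ ▸ termNorm_le_gaussNorm (hf.mono (fun i => (hs_pos i).le) hsr) I
  exact termNorm_le_termNorm_of_le hs_pos hsr hIJ hI_le

theorem termNorm_pos_of_mem_normAttainingIndices (hf0 : f ≠ 0) (hf : MemPolydisc r f)
    {I : Fin n →₀ ℕ} (hI : I ∈ normAttainingIndices r f) : 0 < termNorm r f I := by
  obtain ⟨s, hs, hI⟩ := hI
  have hs_pos : ∀ i, 0 < s i := fun i => (hs i).1
  have hsr : s ≤ r := fun i => (hs i).2
  have hI_pos : 0 < termNorm s f I :=
    hI ▸ gaussNorm_pos_s8 hs_pos hf0 (hf.mono (fun i => (hs_pos i).le) hsr)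
  exact hI_pos.trans_le (termNorm_mono (fun i => (hs_pos i).le) hsr f I)

theorem finite_normAttainingIndices (hf0 : f ≠ 0) (hf : MemPolydisc r f) :
    (normAttainingIndices r f).Finite :=
  Set.Finite.of_monotoneOn_of_tendsto_cofinite_zero hf
    (fun _ => termNorm_pos_of_mem_normAttainingIndices hf0 hf)
    (monotoneOn_termNorm_normAttainingIndices hf)

/-- The supremum defining `polyOrd` is over a finite nonempty set, hence attained. -/
theorem polyOrd_mem_image_normAttainingIndices (hf0 : f ≠ 0) (hf : MemPolydisc r f)
    {s : Fin n → ℝ} (hs : ∀ i, 0 < s i ∧ s i ≤ r i) :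
    polyOrd s f ∈ (fun I : Fin n →₀ ℕ => I.sum fun _ k => k) '' normAttainingIndices r f := by
  have hs_pos : ∀ i, 0 < s i := fun i => (hs i).1
  have hsr : s ≤ r := fun i => (hs i).2
  have hsub : {d : ℕ | ∃ I : Fin n →₀ ℕ, (I.sum fun _ k => k) = d ∧
      ‖MvPowerSeries.coeff I f‖ * ∏ i, s i ^ I i = gaussNorm s f} ⊆
      (fun I : Fin n →₀ ℕ => I.sum fun _ k => k) '' normAttainingIndices r f := by
    rintro _ ⟨I, rfl, hI⟩
    exact ⟨I, ⟨s, hs, hI⟩, rfl⟩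
  obtain ⟨I, hI⟩ := exists_termNorm_eq_gaussNorm hs_pos hf0
    (hf.mono (fun i => (hs_pos i).le) hsr)
  exact hsub (Nat.sSup_mem ⟨_, I, rfl, hI⟩
    (((finite_normAttainingIndices hf0 hf).image _).subset hsub).bddAbove)

end Polydisc

theorem finite_norm_attaining_indices_general {K : Type*} [NormedField K] {n : ℕ} (r : Fin n → ℝ)
    (f : MvPowerSeries (Fin n) K) (hf0 : f ≠ 0) (hf : MemPolydisc r f) :
    ({I : Fin n →₀ ℕ | ∃ s : Fin n → ℝ, (∀ i, 0 < s i ∧ s i ≤ r i) ∧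
        ‖MvPowerSeries.coeff I f‖ * ∏ i, s i ^ I i = gaussNorm s f}).Finite ∧
    ({d : ℕ | ∃ s : Fin n → ℝ, (∀ i, 0 < s i ∧ s i ≤ r i) ∧ polyOrd s f = d}).Finite := by
  refine ⟨finite_normAttainingIndices hf0 hf, ?_⟩
  refine ((finite_normAttainingIndices hf0 hf).image fun I => I.sum fun _ k => k).subset ?_
  rintro _ ⟨s, hs, rfl⟩
  exact polyOrd_mem_image_normAttainingIndices hf0 hf hs

/-- For a nonzero element `f` of the polydisc algebra `K{r⁻¹T}`, the set `𝓘(f)` of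
multi-indices `I` for which there is a polyradius `s` with `0 < sᵢ ≤ rᵢ` such that
`‖a_I‖ s^I` attains the Gauss norm of `f` in `K{s⁻¹T}` is finite; in particular the set
of values `ord_{K{s⁻¹T}}(f)` for `s ∈ ∏ (0, rᵢ]` is finite. -/
theorem finite_norm_attaining_indices {K : Type*} [NormedField K] [IsUltrametricDist K]
    [CompleteSpace K] {n : ℕ} (r : Fin n → ℝ) (hr : ∀ i, 0 < r i)
    (f : MvPowerSeries (Fin n) K) (hf0 : f ≠ 0) (hf : MemPolydisc r f) :
    ({I : Fin n →₀ ℕ | ∃ s : Fin n → ℝ, (∀ i, 0 < s i ∧ s i ≤ r i) ∧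
        ‖MvPowerSeries.coeff I f‖ * ∏ i, s i ^ I i = gaussNorm s f}).Finite ∧
    ({d : ℕ | ∃ s : Fin n → ℝ, (∀ i, 0 < s i ∧ s i ≤ r i) ∧ polyOrd s f = d}).Finite :=
  finite_norm_attaining_indices_general r f hf0 hf
end
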